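/- The kinetic distance $d_{\mathrm{kin}}$ on $\mathbb{R}^{1+2d}$ satisfies the triangle inequality: for all $z_1, z_2, z_3$, $d_{\mathrm{kin}}(z_1,z_2) \le d_{\mathrm{kin}}(z_1,z_3) + d_{\mathrm{kin}}(z_3,z_2)$. Together with symmetry and positivity this makes $d_{\mathrm{kin}}$ a distance. -/

import Mathlib

/-!
Two points lie in a common cylinder of radius `r` exactly when their times differ by less
than `r²` and some velocity `ω` is `r`-close to both velocities while their positions,
transported along `ω` to a common time, differ by less than `2 r³` (`ω` is the velocity of
the centre, whose position is the midpoint). This condition is subadditive in `r`: the new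
velocity is taken on the segment between the two old ones, at distances `r₂` and `r₁` from
them, which costs `r₁² r₂ + r₁ r₂²` in the position estimate, absorbed by `2 (r₁ + r₂)³`.
-/

/-- A point of the kinetic phase space `ℝ × ℝᵈ × ℝᵈ` (time, position, velocity). -/
abbrev KPt (d : ℕ) := ℝ × EuclideanSpace ℝ (Fin d) × EuclideanSpace ℝ (Fin d)

/-- The Galilean group operation `z₀ ∘ z = (t₀ + t, x₀ + x + t v₀, v₀ + v)`. -/
noncomputable def kOp {d : ℕ} (z₀ z : KPt d) : KPt d :=
  (z₀.1 + z.1, z₀.2.1 + z.2.1 + z.1 • z₀.2.2, z₀.2.2 + z.2.2)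

/-- The Galilean inverse `z⁻¹ = (-t, -x + t v, -v)`. -/
noncomputable def kInv {d : ℕ} (z : KPt d) : KPt d :=
  (-z.1, -z.2.1 + z.1 • z.2.2, -z.2.2)

/-- The kinetic cylinder `Q_r = (-r², 0] × B_{r³} × B_r` centered at the origin. -/
def kCyl (d : ℕ) (r : ℝ) : Set (KPt d) :=
  Set.Ioc (-r ^ 2) 0 ×ˢ Metric.ball 0 (r ^ 3) ×ˢ Metric.ball 0 r

/-- The kinetic cylinder `Q_r(z₀) = {z₀ ∘ ζ : ζ ∈ Q_r}` centered at `z₀`. -/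
def kCylAt {d : ℕ} (z₀ : KPt d) (r : ℝ) : Set (KPt d) := kOp z₀ '' kCyl d r

/-- The kinetic distance: the infimum of the radii `r > 0` such that both points belong
to a common kinetic cylinder `Q_r(z)`. -/
noncomputable def kdist {d : ℕ} (z₁ z₂ : KPt d) : ℝ :=
  sInf {r : ℝ | 0 < r ∧ ∃ z : KPt d, z₁ ∈ kCylAt z r ∧ z₂ ∈ kCylAt z r}


section KNear

variable {E : Type*} [NormedAddCommGroup E] [NormedSpace ℝ E]

def KNear (r : ℝ) (z z' : ℝ × E × E) : Prop :=
  |z.1 - z'.1| < r ^ 2 ∧ ∃ ω : E, ‖z.2.2 - ω‖ < r ∧ ‖z'.2.2 - ω‖ < r ∧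
    ‖z.2.1 - z'.2.1 - (z.1 - z'.1) • ω‖ < 2 * r ^ 3

theorem KNear.pos {r : ℝ} {z z' : ℝ × E × E} (h : KNear r z z') : 0 < r := by
  obtain ⟨-, ω, hv, -⟩ := h
  exact (norm_nonneg _).trans_lt hv

theorem exists_kNear (z z' : ℝ × E × E) : ∃ r, KNear r z z' := by
  set a := |z.1 - z'.1|
  set b := ‖z'.2.2 - z.2.2‖
  set c := ‖z.2.1 - z'.2.1 - (z.1 - z'.1) • z.2.2‖
  have ha : 0 ≤ a := abs_nonneg _
  have hb : 0 ≤ b := norm_nonneg _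
  have hc : 0 ≤ c := norm_nonneg _
  have hr : 1 ≤ 1 + a + b + c := by linarith
  have hr₂ := le_self_pow₀ hr two_ne_zero
  have hr₃ := le_self_pow₀ hr three_ne_zero
  refine ⟨1 + a + b + c, by linarith, z.2.2, by rw [sub_self, norm_zero]; linarith,
    by linarith, ?_⟩
  change c < _
  linarith

theorem KNear.trans {r₁ r₂ : ℝ} {z₁ z₂ z₃ : ℝ × E × E} (h₁ : KNear r₁ z₁ z₃)
    (h₂ : KNear r₂ z₃ z₂) : KNear (r₁ + r₂) z₁ z₂ := by
  have hr₁ := h₁.pos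
  have hr₂ := h₂.pos
  obtain ⟨ht₁, ω₁, hv₁, hv₃, hx₁⟩ := h₁
  obtain ⟨ht₂, ω₂, hv₃', hv₂, hx₂⟩ := h₂
  obtain ⟨ω, hω₁, hω₂⟩ : ∃ ω, ‖ω₁ - ω‖ ≤ r₂ ∧ ‖ω - ω₂‖ ≤ r₁ := by
    simp only [← dist_eq_norm] at hv₃ hv₃' ⊢
    refine exists_dist_le_le hr₂.le hr₁.le ?_
    linarith [dist_triangle_left ω₁ ω₂ z₃.2.2]
  refine ⟨?_, ω, ?_, ?_, ?_⟩
  · calc |z₁.1 - z₂.1| ≤ |z₁.1 - z₃.1| + |z₃.1 - z₂.1| := abs_sub_le _ _ _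
      _ < r₁ ^ 2 + r₂ ^ 2 := add_lt_add ht₁ ht₂
      _ ≤ (r₁ + r₂) ^ 2 := by nlinarith
  · linarith [norm_sub_le_norm_sub_add_norm_sub z₁.2.2 ω₁ ω]
  · linarith [norm_sub_le_norm_sub_add_norm_sub z₂.2.2 ω₂ ω, norm_sub_rev ω ω₂]
  · have hdecomp : z₁.2.1 - z₂.2.1 - (z₁.1 - z₂.1) • ω =
        (z₁.2.1 - z₃.2.1 - (z₁.1 - z₃.1) • ω₁) +
          (z₃.2.1 - z₂.2.1 - (z₃.1 - z₂.1) • ω₂) +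
          (z₁.1 - z₃.1) • (ω₁ - ω) + (z₃.1 - z₂.1) • (ω₂ - ω) := by
      module
    have hcorr₁ : ‖(z₁.1 - z₃.1) • (ω₁ - ω)‖ ≤ r₁ ^ 2 * r₂ := by
      rw [norm_smul, Real.norm_eq_abs]
      exact mul_le_mul ht₁.le hω₁ (norm_nonneg _) (by positivity)
    have hcorr₂ : ‖(z₃.1 - z₂.1) • (ω₂ - ω)‖ ≤ r₂ ^ 2 * r₁ := by
      rw [norm_smul, Real.norm_eq_abs, norm_sub_rev]
      exact mul_le_mul ht₂.le hω₂ (norm_nonneg _) (by positivity)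
    rw [hdecomp]
    refine norm_add₄_le.trans_lt ?_
    nlinarith

end KNear

theorem kOp_kInv_kOp {d : ℕ} (w z : KPt d) : kOp (kInv w) (kOp w z) = z := by
  refine Prod.ext ?_ (Prod.ext ?_ ?_) <;> simp only [kOp, kInv] <;> module

theorem kOp_kOp_kInv {d : ℕ} (w z : KPt d) : kOp w (kOp (kInv w) z) = z := by
  refine Prod.ext ?_ (Prod.ext ?_ ?_) <;> simp only [kOp, kInv] <;> module

theorem mem_kCylAt_iff {d : ℕ} {w z : KPt d} {r : ℝ} :
    z ∈ kCylAt w r ↔ z.1 - w.1 ∈ Set.Ioc (-r ^ 2) 0 ∧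
      ‖z.2.1 - w.2.1 - (z.1 - w.1) • w.2.2‖ < r ^ 3 ∧ ‖z.2.2 - w.2.2‖ < r := by
  have hmove : kOp (kInv w) z =
      (z.1 - w.1, z.2.1 - w.2.1 - (z.1 - w.1) • w.2.2, z.2.2 - w.2.2) := by
    refine Prod.ext ?_ (Prod.ext ?_ ?_) <;> simp only [kOp, kInv] <;> module
  rw [kCylAt, Set.image_eq_preimage_of_inverse (kOp_kInv_kOp w) (kOp_kOp_kInv w),
    Set.mem_preimage, hmove]
  simp only [kCyl, Set.mem_prod, mem_ball_zero_iff]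

theorem exists_kCylAt_iff_kNear {d : ℕ} {z z' : KPt d} {r : ℝ} :
    (∃ w, z ∈ kCylAt w r ∧ z' ∈ kCylAt w r) ↔ KNear r z z' := by
  simp only [mem_kCylAt_iff, Set.mem_Ioc]
  constructor
  · rintro ⟨w, ⟨⟨ht, ht'⟩, hx, hv⟩, ⟨⟨hs, hs'⟩, hy, hu⟩⟩
    refine ⟨abs_sub_lt_iff.2 ⟨by linarith, by linarith⟩, w.2.2, hv, hu, ?_⟩
    have hdiff : z.2.1 - z'.2.1 - (z.1 - z'.1) • w.2.2 =
        (z.2.1 - w.2.1 - (z.1 - w.1) • w.2.2) -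
          (z'.2.1 - w.2.1 - (z'.1 - w.1) • w.2.2) := by
      module
    rw [hdiff]
    linarith [norm_sub_le (z.2.1 - w.2.1 - (z.1 - w.1) • w.2.2)
      (z'.2.1 - w.2.1 - (z'.1 - w.1) • w.2.2)]
  · intro h
    have hr := h.pos
    obtain ⟨ht, ω, hv, hu, hx⟩ := h
    obtain ⟨ht, ht'⟩ := abs_sub_lt_iff.1 ht
    set e := z.2.1 - z'.2.1 - (z.1 - z'.1) • ω
    set τ := max z.1 z'.1
    have hτ : τ < z.1 + r ^ 2 ∧ τ < z'.1 + r ^ 2 :=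
      ⟨max_lt (lt_add_of_pos_right _ (by positivity)) (by linarith),
        max_lt (by linarith) (lt_add_of_pos_right _ (by positivity))⟩
    have he : ‖(2⁻¹ : ℝ) • e‖ < r ^ 3 := by
      rw [norm_smul, Real.norm_of_nonneg (by norm_num)]
      linarith
    set ξ := z.2.1 - (z.1 - τ) • ω - (2⁻¹ : ℝ) • e
    have hξ : z.2.1 - ξ - (z.1 - τ) • ω = (2⁻¹ : ℝ) • e := by module
    have hξ' : z'.2.1 - ξ - (z'.1 - τ) • ω = -((2⁻¹ : ℝ) • e) := by module
    refine ⟨(τ, ξ, ω), ⟨⟨?_, ?_⟩, ?_, hv⟩, ⟨⟨?_, ?_⟩, ?_, hu⟩⟩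
    · linarith
    · linarith [le_max_left z.1 z'.1]
    · rwa [hξ]
    · linarith
    · linarith [le_max_right z.1 z'.1]
    · rwa [hξ', norm_neg]

theorem kdist_eq_sInf_kNear {d : ℕ} (z z' : KPt d) : kdist z z' = sInf {r | KNear r z z'} := by
  simp only [kdist, exists_kCylAt_iff_kNear]
  congr 1
  ext r
  exact ⟨And.right, fun h => ⟨h.pos, h⟩⟩

/-- The triangle inequality for the kinetic distance. -/
theorem stmt16 {d : ℕ} (z₁ z₂ z₃ : KPt d) :
    kdist z₁ z₂ ≤ kdist z₁ z₃ + kdist z₃ z₂ := by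
  have bdd : ∀ z z' : KPt d, BddBelow {r | KNear r z z'} :=
    fun _ _ => ⟨0, fun _ h => h.pos.le⟩
  have ne : ∀ z z' : KPt d, {r | KNear r z z'}.Nonempty := exists_kNear
  simp only [kdist_eq_sInf_kNear]
  rw [← csInf_add (ne _ _) (bdd _ _) (ne _ _) (bdd _ _)]
  refine csInf_le_csInf (bdd _ _) ((ne _ _).add (ne _ _)) ?_
  rintro _ ⟨r₁, h₁, r₂, h₂, rfl⟩
  exact h₁.trans h₂
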